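/- For each i ∈ {0, …, l}, the derivation Q_i is the unique ℂ-derivation D of π₀ satisfying the two conditions: (1) D ∘ ∂ − ∂ ∘ D = −u_i^{(0)} · D, and (2) D(u_j^{(0)}) = −(α_i,α_j) for all 1 ≤ j ≤ l. (This is the computational core of the identification of the left action of the generators e_i of 𝔫₊ on ℂ[N₊/A₊] with the operators Q_i.) -/

import Mathlib

/-!
Condition (1) says `⁅D, ∂⁆ = -u_i^{(0)} • D`, an identity between derivations, so it can be
checked on the variables `u_j^{(n)}`. It also forces the recursion
`D u_j^{(n+1)} = ∂ (D u_j^{(n)}) - u_i^{(0)} D u_j^{(n)}`, which is the Faà di Bruno recursion: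
starting from `D u_j^{(0)} = -(α_i,α_j)` it yields `D u_j^{(n)} = -(α_i,α_j) B_i^{(n)}`, that is,
`D = Q_i` on every variable.
-/

open MvPolynomial

noncomputable section

/-- The algebra of differential polynomials in the variables `u_i^{(n)}`, `1 ≤ i ≤ l`, `n ≥ 0`. -/
abbrev Pi0 (l : ℕ) : Type := MvPolynomial (Fin l × ℕ) ℂ

/-- The variable `u_i^{(n)}`. -/
def u {l : ℕ} (i : Fin l) (n : ℕ) : Pi0 l := X (i, n)

/-- The derivation `∂` with `∂ u_i^{(n)} = u_i^{(n+1)}`. -/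
def pa (l : ℕ) : Derivation ℂ (Pi0 l) (Pi0 l) :=
  mkDerivation ℂ (fun p => X (p.1, p.2 + 1))

/-- An affine generalized Cartan matrix of size `(l+1) × (l+1)`: an indecomposable integer
matrix with `a_{ii} = 2`, `a_{ij} ≤ 0` for `i ≠ j`, `a_{ij} = 0 ↔ a_{ji} = 0`, symmetrizable
by positive rationals `d_i`, and admitting a vector of positive integer labels `(a_0,…,a_l)`
with `∑_j a_j a_{ij} = 0` for all `i`. -/
structure AffineGCM (l : ℕ) where
  A : Matrix (Fin (l+1)) (Fin (l+1)) ℤ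
  diag : ∀ i, A i i = 2
  offdiag : ∀ i j, i ≠ j → A i j ≤ 0
  zeroIff : ∀ i j, A i j = 0 ↔ A j i = 0
  d : Fin (l+1) → ℚ
  d_pos : ∀ i, 0 < d i
  dsymm : ∀ i j, d i * A i j = d j * A j i
  label : Fin (l+1) → ℕ
  label_pos : ∀ i, 0 < label i
  null : ∀ i, ∑ j, (label j : ℤ) * A i j = 0
  indec : ∀ S : Set (Fin (l+1)), (∀ i ∈ S, ∀ j ∉ S, A i j = 0) → S = ∅ ∨ S = Set.univ

namespace AffineGCM

variable {l : ℕ} (K : AffineGCM l)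

/-- The symmetrized bilinear form `(α_i, α_j) := d_i a_{ij}`. -/
def B (i j : Fin (l+1)) : ℂ := (K.d i : ℂ) * (K.A i j : ℂ)

/-- `u_j^{(n)}` for `j = 0,…,l`, where `u_0^{(n)} := -(1/a_0) ∑_{i=1}^l a_i u_i^{(n)}`.
Here `j = 0` is `Fin.cases`' zero case and `j = i.succ` corresponds to `u_i^{(n)}`. -/
def Uv (j : Fin (l+1)) (n : ℕ) : Pi0 l :=
  Fin.cases (-(1 / (K.label 0 : ℂ)) • ∑ i : Fin l, (K.label i.succ : ℂ) • u i n)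
    (fun i => u i n) j

/-- The Faà di Bruno polynomials: `B_i^{(0)} = 1`,
`B_i^{(n+1)} = -u_i^{(0)} B_i^{(n)} + ∂ B_i^{(n)}`. -/
def FdB (i : Fin (l+1)) : ℕ → Pi0 l
  | 0 => 1
  | n+1 => -(K.Uv i 0) * FdB i n + pa l (FdB i n)

/-- The unique `ℂ`-derivation `Q_i` of `π₀` with `Q_i u_j^{(n)} = -(α_i,α_j) B_i^{(n)}`
for `1 ≤ j ≤ l`, `n ≥ 0`. -/
def Q (i : Fin (l+1)) : Derivation ℂ (Pi0 l) (Pi0 l) :=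
  mkDerivation ℂ (fun p => -(K.B i p.1.succ) • K.FdB i p.2)

end AffineGCM

section TwistedCommutation

variable {l : ℕ}

theorem pa_X (j : Fin l) (n : ℕ) : pa l (X (j, n)) = X (j, n + 1) :=
  mkDerivation_X ℂ _ (j, n)

theorem twisted_comm_of_X (D : Derivation ℂ (Pi0 l) (Pi0 l)) (c : Pi0 l)
    (hX : ∀ j n, D (pa l (X (j, n))) - pa l (D (X (j, n))) = c * D (X (j, n))) (P : Pi0 l) :
    D (pa l P) - pa l (D P) = c * D P := by
  have hbracket : ⁅D, pa l⁆ = c • D :=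
    derivation_ext fun p => by simpa [Derivation.commutator_apply] using hX p.1 p.2
  simpa [Derivation.commutator_apply] using congrArg (· P) hbracket

theorem derivation_eq_of_twisted_comm {D₁ D₂ : Derivation ℂ (Pi0 l) (Pi0 l)} (c : Pi0 l)
    (h₁ : ∀ P, D₁ (pa l P) - pa l (D₁ P) = c * D₁ P)
    (h₂ : ∀ P, D₂ (pa l P) - pa l (D₂ P) = c * D₂ P)
    (h₀ : ∀ j, D₁ (u j 0) = D₂ (u j 0)) : D₁ = D₂ := by
  refine derivation_ext fun ⟨j, n⟩ => ?_
  induction n with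
  | zero => exact h₀ j
  | succ n ih =>
    have step : ∀ D : Derivation ℂ (Pi0 l) (Pi0 l),
        (∀ P, D (pa l P) - pa l (D P) = c * D P) →
        D (X (j, n + 1)) = pa l (D (X (j, n))) + c * D (X (j, n)) := by
      intro D hD
      rw [← pa_X, ← hD]
      ring
    rw [step D₁ h₁, step D₂ h₂, ih]

end TwistedCommutation

namespace AffineGCM

variable {l : ℕ} (K : AffineGCM l)

theorem Q_X (i : Fin (l + 1)) (j : Fin l) (n : ℕ) :
    K.Q i (X (j, n)) = -(K.B i j.succ) • K.FdB i n :=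
  mkDerivation_X ℂ _ (j, n)

theorem Q_u_zero (i : Fin (l + 1)) (j : Fin l) : K.Q i (u j 0) = C (-(K.B i j.succ)) := by
  rw [u, Q_X, FdB, smul_eq_C_mul, mul_one]

theorem Q_twisted_comm (i : Fin (l + 1)) (P : Pi0 l) :
    K.Q i (pa l P) - pa l (K.Q i P) = -(K.Uv i 0) * K.Q i P := by
  refine twisted_comm_of_X _ _ (fun j n => ?_) P
  rw [pa_X, Q_X, Q_X, Derivation.map_smul, FdB, smul_eq_C_mul, smul_eq_C_mul, smul_eq_C_mul]
  ring

end AffineGCM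

theorem Q_unique_general (l : ℕ) (K : AffineGCM l) (i : Fin (l+1)) :
    ((∀ P : Pi0 l, K.Q i (pa l P) - pa l (K.Q i P) = -(K.Uv i 0) * K.Q i P) ∧
      (∀ j : Fin l, K.Q i (u j 0) = C (-(K.B i j.succ)))) ∧
    (∀ D : Derivation ℂ (Pi0 l) (Pi0 l),
      (∀ P : Pi0 l, D (pa l P) - pa l (D P) = -(K.Uv i 0) * D P) →
      (∀ j : Fin l, D (u j 0) = C (-(K.B i j.succ))) →
      D = K.Q i) :=
  ⟨⟨K.Q_twisted_comm i, K.Q_u_zero i⟩, fun _ hcomm hu =>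
    derivation_eq_of_twisted_comm _ hcomm (K.Q_twisted_comm i)
      fun j => (hu j).trans (K.Q_u_zero i j).symm⟩

/-- `Q_i` is the unique `ℂ`-derivation `D` of `π₀` with
(1) `D∘∂ − ∂∘D = −u_i^{(0)} · D` and (2) `D(u_j^{(0)}) = −(α_i,α_j)` for `1 ≤ j ≤ l`. -/
theorem Q_unique (l : ℕ) (hl : 1 ≤ l) (K : AffineGCM l) (i : Fin (l+1)) :
    ((∀ P : Pi0 l, K.Q i (pa l P) - pa l (K.Q i P) = -(K.Uv i 0) * K.Q i P) ∧
      (∀ j : Fin l, K.Q i (u j 0) = C (-(K.B i j.succ)))) ∧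
    (∀ D : Derivation ℂ (Pi0 l) (Pi0 l),
      (∀ P : Pi0 l, D (pa l P) - pa l (D P) = -(K.Uv i 0) * D P) →
      (∀ j : Fin l, D (u j 0) = C (-(K.B i j.succ))) →
      D = K.Q i) :=
  Q_unique_general l K i
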